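/- arXiv:1506.05283 — 2 statements merged into one kernel-verified Lean document; each statement's English description precedes it below -/
import Mathlib

section
/- Let u be a word over {τ_1, ..., τ_{n−1}}, let ū be the element of VB_n represented by u, and let i, j ∈ {1, ..., n} with i ≠ j. Then ū δ_{i,j} ū^{−1} = δ_{i',j'}, where i' = θ(ū)(i) and j' = θ(ū)(j). -/
/-! The virtual braid group `VB (n+1)` on `n+1` strands, presented with generators
`σ_0, ..., σ_{n-1}` and `τ_0, ..., τ_{n-1}` (0-based indexing). -/

/-- The free-group generator `σ_i`. -/
def sigmaF {n : ℕ} (i : Fin n) : FreeGroup (Fin n ⊕ Fin n) := FreeGroup.of (Sum.inl i)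

/-- The free-group generator `τ_i`. -/
def tauF {n : ℕ} (i : Fin n) : FreeGroup (Fin n ⊕ Fin n) := FreeGroup.of (Sum.inr i)

/-- The defining relators of the virtual braid group on `n+1` strands:
`τ_i² = 1`; `σ_iσ_j = σ_jσ_i`, `σ_iτ_j = τ_jσ_i`, `τ_iτ_j = τ_jτ_i` for `|i−j| ≥ 2`;
`σ_iσ_jσ_i = σ_jσ_iσ_j`, `σ_iτ_jτ_i = τ_jτ_iσ_j`, `τ_iτ_jτ_i = τ_jτ_iτ_j` for `|i−j| = 1`. -/
def VBRels (n : ℕ) : Set (FreeGroup (Fin n ⊕ Fin n)) :=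
  {r | (∃ i : Fin n, r = tauF i * tauF i) ∨
    (∃ i j : Fin n, ((i : ℕ) + 2 ≤ j ∨ (j : ℕ) + 2 ≤ i) ∧
      (r = sigmaF i * sigmaF j * (sigmaF j * sigmaF i)⁻¹ ∨
       r = sigmaF i * tauF j * (tauF j * sigmaF i)⁻¹ ∨
       r = tauF i * tauF j * (tauF j * tauF i)⁻¹)) ∨
    (∃ i j : Fin n, ((i : ℕ) + 1 = j ∨ (j : ℕ) + 1 = i) ∧
      (r = sigmaF i * sigmaF j * sigmaF i * (sigmaF j * sigmaF i * sigmaF j)⁻¹ ∨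
       r = sigmaF i * tauF j * tauF i * (tauF j * tauF i * sigmaF j)⁻¹ ∨
       r = tauF i * tauF j * tauF i * (tauF j * tauF i * tauF j)⁻¹))}

/-- The virtual braid group on `n+1` strands. -/
abbrev VB (n : ℕ) := PresentedGroup (VBRels n)

/-- The generator `σ_i` of `VB`. -/
def sigmaV {n : ℕ} (i : Fin n) : VB n := PresentedGroup.of (Sum.inl i)

/-- The generator `τ_i` of `VB`. -/
def tauV {n : ℕ} (i : Fin n) : VB n := PresentedGroup.of (Sum.inr i)

/-- `σ` with a natural-number index (equal to `1` when out of range). -/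
def sigmaN {n : ℕ} (k : ℕ) : VB n := if h : k < n then sigmaV ⟨k, h⟩ else 1

/-- `τ` with a natural-number index (equal to `1` when out of range). -/
def tauN {n : ℕ} (k : ℕ) : VB n := if h : k < n then tauV ⟨k, h⟩ else 1

/-- The element `δ_{i,j}` of `VB n` (0-based strand indices `i ≠ j` in `{0, ..., n}`):
for `i < j`, `δ_{i,j} = τ_i ⋯ τ_{j-2} σ_{j-1} τ_{j-2} ⋯ τ_i` and
`δ_{j,i} = τ_i ⋯ τ_{j-1} σ_{j-1} τ_{j-1} ⋯ τ_i`. -/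
def deltaV {n : ℕ} (i j : ℕ) : VB n :=
  if i < j then
    ((List.range' i (j - 1 - i)).map tauN).prod * sigmaN (j - 1) *
      (((List.range' i (j - 1 - i)).reverse).map tauN).prod
  else if j < i then
    ((List.range' j (i - j)).map tauN).prod * sigmaN (i - 1) *
      (((List.range' j (i - j)).reverse).map tauN).prod
  else 1

/-!
Since `θ(τ_c)` is the transposition `s_c = (c c+1)`, by induction on the word it suffices to
show `τ_c δ_{i,j} τ_c = δ_{s_c i, s_c j}`. Let `m = min i j`. For `c = m` this is the
definition of `δ` (peel off the outer `τ_m`), for `c + 1 = m` it is the same identity read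
backwards, and when `c` is at distance at least two from every strand that `δ_{i,j}` involves,
`τ_c` commutes with `δ_{i,j}`. When `m < c`, conjugating by `τ_m` replaces the pair by one
whose minimum is closer to `c`; what remains are the pairs in `{c-1, c, c+1}`, which come from
the relation `σ_a τ_{a+1} τ_a = τ_{a+1} τ_a σ_{a+1}`, and `m + 1 = c < max i j - 1`, where the
braid relation for the `τ`s lets `τ_c` pass through.
-/

namespace VB

variable {n : ℕ}

open Equiv PresentedGroup

@[simp]
theorem tauN_mul_self (c : ℕ) : (tauN c : VB n) * tauN c = 1 := by
  unfold tauN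
  split
  · exact one_of_mem (Or.inl ⟨_, rfl⟩)
  · exact one_mul 1

@[simp]
theorem tauN_mul_tauN_mul (c : ℕ) (x : VB n) : tauN c * (tauN c * x) = x := by
  rw [← mul_assoc, tauN_mul_self, one_mul]

theorem tauN_inv (c : ℕ) : (tauN c : VB n)⁻¹ = tauN c :=
  inv_eq_of_mul_eq_one_right (tauN_mul_self c)

theorem tauN_mul_eq_iff {c : ℕ} {x y : VB n} :
    tauN c * x * tauN c = y ↔ x = tauN c * y * tauN c := by
  constructor <;> rintro rfl <;> simp [mul_assoc]

theorem commute_tauN_tauN {a b : ℕ} (h : a + 2 ≤ b ∨ b + 2 ≤ a) :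
    Commute (tauN a : VB n) (tauN b) := by
  unfold tauN
  split_ifs with ha hb
  · exact mk_eq_mk_of_mul_inv_mem (Or.inr (Or.inl ⟨⟨a, ha⟩, ⟨b, hb⟩, h, Or.inr (Or.inr rfl)⟩))
  all_goals simp

theorem commute_tauN_sigmaN {a b : ℕ} (h : a + 2 ≤ b ∨ b + 2 ≤ a) :
    Commute (tauN a : VB n) (sigmaN b) := by
  unfold tauN sigmaN
  split_ifs with ha hb
  · exact (mk_eq_mk_of_mul_inv_mem
      (Or.inr (Or.inl ⟨⟨b, hb⟩, ⟨a, ha⟩, h.symm, Or.inr (Or.inl rfl)⟩))).symm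
  all_goals simp

theorem tauN_braid {a : ℕ} (h : a + 1 < n) :
    (tauN a : VB n) * tauN (a + 1) * tauN a = tauN (a + 1) * tauN a * tauN (a + 1) := by
  simp only [tauN, dif_pos h, dif_pos (show a < n by omega)]
  exact mk_eq_mk_of_mul_inv_mem
    (Or.inr (Or.inr ⟨⟨a, _⟩, ⟨a + 1, h⟩, Or.inl rfl, Or.inr (Or.inr rfl)⟩))

theorem sigmaN_tauN_tauN {a : ℕ} (h : a + 1 < n) :
    (sigmaN a : VB n) * tauN (a + 1) * tauN a = tauN (a + 1) * tauN a * sigmaN (a + 1) := by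
  simp only [tauN, sigmaN, dif_pos h, dif_pos (show a < n by omega)]
  exact mk_eq_mk_of_mul_inv_mem
    (Or.inr (Or.inr ⟨⟨a, _⟩, ⟨a + 1, h⟩, Or.inl rfl, Or.inr (Or.inl rfl)⟩))

theorem deltaV_self_succ (i : ℕ) : (deltaV i (i + 1) : VB n) = sigmaN i := by
  simp [deltaV]

theorem deltaV_succ_self (i : ℕ) : (deltaV (i + 1) i : VB n) = tauN i * sigmaN i * tauN i := by
  simp [deltaV]

theorem deltaV_eq_tauN_conj_left {i j : ℕ} (h : i + 1 < j) :
    (deltaV i j : VB n) = tauN i * deltaV (i + 1) j * tauN i := by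
  rw [deltaV, if_pos (by omega), deltaV, if_pos h,
    show j - 1 - i = j - 1 - (i + 1) + 1 by omega, List.range'_succ]
  simp [mul_assoc]

theorem deltaV_eq_tauN_conj_right {i j : ℕ} (h : i + 1 < j) :
    (deltaV j i : VB n) = tauN i * deltaV j (i + 1) * tauN i := by
  rw [deltaV, if_neg (by omega), if_pos (by omega), deltaV, if_neg (by omega), if_pos h,
    show j - i = j - (i + 1) + 1 by omega, List.range'_succ]
  simp [mul_assoc]

theorem commute_tauN_deltaV {c i j : ℕ} (h : c + 2 ≤ min i j ∨ max i j + 1 ≤ c) :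
    Commute (tauN c : VB n) (deltaV i j) := by
  unfold deltaV
  split_ifs
  all_goals first
    | exact Commute.one_right _
    | refine ((Commute.list_prod_right _ _ ?_).mul_right (commute_tauN_sigmaN (by omega))).mul_right
        (Commute.list_prod_right _ _ ?_) <;>
      · simp only [List.mem_map, List.mem_reverse, List.mem_range'_1]
        rintro _ ⟨k, hk, rfl⟩
        exact commute_tauN_tauN (by omega)

theorem tauN_conj_deltaV_of_far {c i j : ℕ} (h : c + 2 ≤ min i j ∨ max i j + 1 ≤ c) :
    tauN c * (deltaV i j : VB n) * tauN c = deltaV (swap c (c + 1) i) (swap c (c + 1) j) := by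
  rw [swap_apply_of_ne_of_ne (x := i) (by omega) (by omega),
    swap_apply_of_ne_of_ne (x := j) (by omega) (by omega), (commute_tauN_deltaV h).eq, mul_assoc,
    tauN_mul_self, mul_one]

theorem tauN_conj_deltaV_of_min_eq {c i j : ℕ} (hij : i ≠ j) (hc : min i j = c) :
    tauN c * (deltaV i j : VB n) * tauN c = deltaV (swap c (c + 1) i) (swap c (c + 1) j) := by
  rcases hij.lt_or_gt with h | h
  · obtain rfl : c = i := by omega
    rw [swap_apply_left]
    rcases (show j = c + 1 ∨ c + 1 < j by omega) with rfl | hj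
    · rw [swap_apply_right, deltaV_self_succ, deltaV_succ_self]
    · rw [swap_apply_of_ne_of_ne (by omega) (by omega), deltaV_eq_tauN_conj_left hj]
      simp [mul_assoc]
  · obtain rfl : c = j := by omega
    rw [swap_apply_left]
    rcases (show i = c + 1 ∨ c + 1 < i by omega) with rfl | hi
    · rw [swap_apply_right, deltaV_self_succ, deltaV_succ_self]
      simp [mul_assoc]
    · rw [swap_apply_of_ne_of_ne (by omega) (by omega), deltaV_eq_tauN_conj_right hi]
      simp [mul_assoc]

theorem tauN_conj_deltaV_of_swap {c i j : ℕ}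
    (h : tauN c * (deltaV (swap c (c + 1) i) (swap c (c + 1) j) : VB n) * tauN c =
      deltaV (swap c (c + 1) (swap c (c + 1) i)) (swap c (c + 1) (swap c (c + 1) j))) :
    tauN c * (deltaV i j : VB n) * tauN c = deltaV (swap c (c + 1) i) (swap c (c + 1) j) := by
  rw [swap_apply_self, swap_apply_self] at h
  exact (tauN_mul_eq_iff.mp h).symm

theorem tauN_succ_tauN_sigmaN_succ {a : ℕ} (h : a + 1 < n) :
    (tauN (a + 1) : VB n) * tauN a * sigmaN (a + 1) * tauN a * tauN (a + 1) = sigmaN a := by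
  rw [← sigmaN_tauN_tauN h]
  simp [mul_assoc]

theorem tauN_succ_conj_deltaV_add_two {a : ℕ} (h : a + 1 < n) :
    tauN (a + 1) * (deltaV a (a + 2) : VB n) * tauN (a + 1) = deltaV a (a + 1) := by
  rw [deltaV_eq_tauN_conj_left (by omega), deltaV_self_succ, deltaV_self_succ,
    ← tauN_succ_tauN_sigmaN_succ h]
  simp only [mul_assoc]

theorem tauN_succ_conj_deltaV_add_two_self {a : ℕ} (h : a + 1 < n) :
    tauN (a + 1) * (deltaV (a + 2) a : VB n) * tauN (a + 1) = deltaV (a + 1) a := by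
  rw [deltaV_eq_tauN_conj_right (by omega), deltaV_succ_self, deltaV_succ_self,
    ← tauN_succ_tauN_sigmaN_succ h]
  calc _ = tauN (a + 1) * tauN a * tauN (a + 1) * sigmaN (a + 1) *
        (tauN (a + 1) * tauN a * tauN (a + 1)) := by simp only [mul_assoc]
    _ = _ := by rw [← tauN_braid h]; simp only [mul_assoc]

theorem tauN_conj_deltaV_of_min_succ_eq_of_max_le {c i j : ℕ} (hc : c < n) (hij : i ≠ j)
    (hm : min i j + 1 = c) (hM : max i j ≤ c + 1) :
    tauN c * (deltaV i j : VB n) * tauN c = deltaV (swap c (c + 1) i) (swap c (c + 1) j) := by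
  obtain rfl := hm
  set a := min i j
  rcases (show (i = a ∧ j = a + 2) ∨ (i = a + 2 ∧ j = a) ∨ (i = a ∧ j = a + 1) ∨
      (i = a + 1 ∧ j = a) by omega) with ⟨hi, hj⟩ | ⟨hi, hj⟩ | ⟨hi, hj⟩ | ⟨hi, hj⟩ <;>
    rw [hi, hj]
  · simpa [swap_apply_def, add_assoc] using tauN_succ_conj_deltaV_add_two hc
  · simpa [swap_apply_def, add_assoc] using tauN_succ_conj_deltaV_add_two_self hc
  · apply tauN_conj_deltaV_of_swap
    simpa [swap_apply_def, add_assoc] using tauN_succ_conj_deltaV_add_two hc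
  · apply tauN_conj_deltaV_of_swap
    simpa [swap_apply_def, add_assoc] using tauN_succ_conj_deltaV_add_two_self hc

theorem tauN_conj_deltaV_of_min_succ_eq_of_add_two_le_max {c i j : ℕ} (hc : c < n) (hij : i ≠ j)
    (hm : min i j + 1 = c) (hM : c + 2 ≤ max i j) :
    tauN c * (deltaV i j : VB n) * tauN c = deltaV (swap c (c + 1) i) (swap c (c + 1) j) := by
  obtain rfl := hm
  set m := min i j
  set i' := swap m (m + 1) i
  set j' := swap m (m + 1) j
  have hmin' : min i' j' = m + 1 := by
    simp only [i', j', swap_apply_def]; split_ifs <;> omega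
  have h₁ : (deltaV i j : VB n) = tauN m * deltaV i' j' * tauN m :=
    tauN_mul_eq_iff.mp (tauN_conj_deltaV_of_min_eq hij rfl)
  have h₂ : (deltaV i' j' : VB n) =
      tauN (m + 1) * deltaV (swap (m + 1) (m + 2) i') (swap (m + 1) (m + 2) j') * tauN (m + 1) :=
    tauN_mul_eq_iff.mp (tauN_conj_deltaV_of_min_eq ((swap _ _).injective.ne hij) hmin')
  have h₃ : Commute (tauN m : VB n) (deltaV (swap (m + 1) (m + 2) i') (swap (m + 1) (m + 2) j')) :=
    commute_tauN_deltaV (Or.inl (by simp only [i', j', swap_apply_def]; split_ifs <;> omega))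
  rw [swap_apply_of_ne_of_ne (x := i) (by omega) (by omega),
    swap_apply_of_ne_of_ne (x := j) (by omega) (by omega), h₁, h₂]
  calc _ = tauN (m + 1) * tauN m * tauN (m + 1) * deltaV (swap (m + 1) (m + 2) i')
        (swap (m + 1) (m + 2) j') * (tauN (m + 1) * tauN m * tauN (m + 1)) := by
        simp only [mul_assoc]
    _ = tauN m * (tauN (m + 1) * (tauN m * deltaV (swap (m + 1) (m + 2) i')
        (swap (m + 1) (m + 2) j') * tauN m) * tauN (m + 1)) * tauN m := by
        rw [← tauN_braid hc]; simp only [mul_assoc]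
    _ = _ := by rw [h₃.eq, mul_assoc _ (tauN m), tauN_mul_self, mul_one]

theorem tauN_conj_deltaV_of_min_add_two_le {c i j : ℕ} (hij : i ≠ j) (hm : min i j + 2 ≤ c)
    (ih : tauN c * (deltaV (swap (min i j) (min i j + 1) i) (swap (min i j) (min i j + 1) j) :
        VB n) * tauN c = deltaV (swap c (c + 1) (swap (min i j) (min i j + 1) i))
          (swap c (c + 1) (swap (min i j) (min i j + 1) j))) :
    tauN c * (deltaV i j : VB n) * tauN c = deltaV (swap c (c + 1) i) (swap c (c + 1) j) := by
  set m := min i j with hm_def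
  have hcomm : Commute (tauN c : VB n) (tauN m) := commute_tauN_tauN (Or.inr hm)
  have hswap : ∀ x, swap c (c + 1) (swap m (m + 1) x) = swap m (m + 1) (swap c (c + 1) x) := by
    intro x; simp only [swap_apply_def]; split_ifs <;> omega
  have hmin : min (swap c (c + 1) i) (swap c (c + 1) j) = m := by
    simp only [swap_apply_def]; split_ifs <;> omega
  rw [tauN_mul_eq_iff.mp (tauN_conj_deltaV_of_min_eq hij hm_def.symm), tauN_mul_eq_iff.mp
    (tauN_conj_deltaV_of_min_eq ((swap _ _).injective.ne hij) hmin), ← hswap, ← hswap, ← ih]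
  simp only [mul_assoc, hcomm.left_comm]
  rw [← hcomm.eq]

theorem tauN_conj_deltaV {c : ℕ} (hc : c < n) {i j : ℕ} (hij : i ≠ j) :
    tauN c * (deltaV i j : VB n) * tauN c = deltaV (swap c (c + 1) i) (swap c (c + 1) j) := by
  rcases (show c + 2 ≤ min i j ∨ max i j + 1 ≤ c ∨ min i j = c ∨ min i j = c + 1 ∨
      (min i j + 1 = c ∧ max i j ≤ c + 1) ∨ (min i j + 1 = c ∧ c + 2 ≤ max i j) ∨
      (min i j + 2 ≤ c ∧ c ≤ max i j) by omega) with h | h | h | h | ⟨hm, hM⟩ | ⟨hm, hM⟩ | ⟨hm, hM⟩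
  · exact tauN_conj_deltaV_of_far (Or.inl h)
  · exact tauN_conj_deltaV_of_far (Or.inr h)
  · exact tauN_conj_deltaV_of_min_eq hij h
  · refine tauN_conj_deltaV_of_swap (tauN_conj_deltaV_of_min_eq ((swap _ _).injective.ne hij) ?_)
    simp only [swap_apply_def]; split_ifs <;> omega
  · exact tauN_conj_deltaV_of_min_succ_eq_of_max_le hc hij hm hM
  · exact tauN_conj_deltaV_of_min_succ_eq_of_add_two_le_max hc hij hm hM
  · exact tauN_conj_deltaV_of_min_add_two_le hij hm
      (tauN_conj_deltaV hc ((swap _ _).injective.ne hij))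
termination_by c - min i j
decreasing_by simp only [swap_apply_def]; split_ifs <;> omega

theorem tauV_eq_tauN (k : Fin n) : tauV k = tauN (k : ℕ) := by
  rw [tauN, dif_pos k.isLt]

theorem val_swap_castSucc_succ (k : Fin n) (x : Fin (n + 1)) :
    ((swap k.castSucc k.succ x : Fin (n + 1)) : ℕ) = swap (k : ℕ) (k + 1) x :=
  Fin.val_injective.map_swap _ _ _

end VB

theorem tau_conj_delta_general (n : ℕ) (θ : VB n →* Equiv.Perm (Fin (n + 1)))
    (hτ : ∀ k : Fin n, θ (tauV k) = Equiv.swap k.castSucc k.succ)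
    (u : List (Fin n)) (i j : Fin (n + 1)) (hij : i ≠ j) :
    (u.map (fun k => tauV k)).prod * deltaV (i : ℕ) (j : ℕ) *
        ((u.map (fun k => tauV k)).prod)⁻¹ =
      deltaV ((θ (u.map (fun k => tauV k)).prod i : Fin (n + 1)) : ℕ)
        ((θ (u.map (fun k => tauV k)).prod j : Fin (n + 1)) : ℕ) := by
  induction u with
  | nil => simp
  | cons k u ih =>
    simp only [List.map_cons, List.prod_cons, map_mul, Equiv.Perm.mul_apply, hτ,
      VB.val_swap_castSucc_succ]
    set P := (u.map fun k => tauV k).prod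
    have hne : ((θ P i : Fin (n + 1)) : ℕ) ≠ θ P j := fun h => hij ((θ P).injective (Fin.ext h))
    calc tauV k * P * deltaV i j * (tauV k * P)⁻¹
        = tauN k * (P * deltaV i j * P⁻¹) * tauN k := by
          simp only [VB.tauV_eq_tauN, mul_inv_rev, VB.tauN_inv, mul_assoc]
      _ = _ := by rw [ih, VB.tauN_conj_deltaV k.isLt hne]

/-- Let `u` be a word over `{τ_0, ..., τ_{n-1}}`, let `ū ∈ VB_{n+1}` be
the element it represents, and let `i ≠ j` be strands. Then
`ū δ_{i,j} ū⁻¹ = δ_{θ(ū)(i), θ(ū)(j)}`, where `θ : VB_{n+1} → S_{n+1}` is the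
homomorphism with `θ(σ_k) = 1` and `θ(τ_k) = (k, k+1)`. -/
theorem tau_conj_delta (n : ℕ) (θ : VB n →* Equiv.Perm (Fin (n + 1)))
    (hσ : ∀ k : Fin n, θ (sigmaV k) = 1)
    (hτ : ∀ k : Fin n, θ (tauV k) = Equiv.swap k.castSucc k.succ)
    (u : List (Fin n)) (i j : Fin (n + 1)) (hij : i ≠ j) :
    (u.map (fun k => tauV k)).prod * deltaV (i : ℕ) (j : ℕ) *
        ((u.map (fun k => tauV k)).prod)⁻¹ =
      deltaV ((θ (u.map (fun k => tauV k)).prod i : Fin (n + 1)) : ℕ)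
        ((θ (u.map (fun k => tauV k)).prod j : Fin (n + 1)) : ℕ) :=
  tau_conj_delta_general n θ hτ u i j hij
end

section
/- Let X be a full and indecomposable nonempty subset of S = {δ_{i,j} : 1 ≤ i ≠ j ≤ n}. Then there exist a permutation g ∈ S_n and an integer m ∈ {2, ..., n} such that either X = g·Z_m, or X = g·Z̃_m with m ≥ 3, where Z_m = {δ_{1,2}, ..., δ_{m−1,m}} and Z̃_m = {δ_{1,2}, ..., δ_{m−1,m}, δ_{m,1}}, and g acts by g·δ_{i,j} = δ_{g(i),g(j)}. -/
/-! The group `KB n`, presented with generators `δ_{i,j}` for `i ≠ j` in `Fin n`, and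
relations `δ_{i,j}δ_{k,l} = δ_{k,l}δ_{i,j}` for `i,j,k,l` distinct and
`δ_{i,j}δ_{j,k}δ_{i,j} = δ_{j,k}δ_{i,j}δ_{j,k}` for `i,j,k` distinct. -/

/-- The generating set `S = {δ_{i,j} : i ≠ j}`, encoded as pairs of distinct indices. -/
abbrev KBGen (n : ℕ) := {p : Fin n × Fin n // p.1 ≠ p.2}

/-- The free-group generator `δ_{i,j}`. -/
def deltaF {n : ℕ} (i j : Fin n) (h : i ≠ j) : FreeGroup (KBGen n) := FreeGroup.of ⟨(i, j), h⟩

/-- The defining relators of `KB n`. -/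
def KBRels (n : ℕ) : Set (FreeGroup (KBGen n)) :=
  {r | (∃ (i j k l : Fin n) (hij : i ≠ j) (hkl : k ≠ l),
          i ≠ k ∧ i ≠ l ∧ j ≠ k ∧ j ≠ l ∧
          r = deltaF i j hij * deltaF k l hkl * (deltaF k l hkl * deltaF i j hij)⁻¹) ∨
       (∃ (i j k : Fin n) (hij : i ≠ j) (hjk : j ≠ k) (_ : i ≠ k),
          r = deltaF i j hij * deltaF j k hjk * deltaF i j hij *
            (deltaF j k hjk * deltaF i j hij * deltaF j k hjk)⁻¹)}

/-- The group `KB n` (the kernel of `VB_n → S_n`, via Rabenda's presentation). -/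
abbrev KB (n : ℕ) := PresentedGroup (KBRels n)

/-- The generator `δ_{i,j}` of `KB n`. -/
def deltaK {n : ℕ} (i j : Fin n) (h : i ≠ j) : KB n := PresentedGroup.of ⟨(i, j), h⟩

/-- The subgroup `KB_n(Y)` generated by a subset `Y` of the generating set. -/
def KBsub {n : ℕ} (Y : Set (KBGen n)) : Subgroup (KB n) :=
  Subgroup.closure (PresentedGroup.of '' Y)

/-- The support of the generator `δ_{i,j}` is `{i, j}`. -/
def KBsupp {n : ℕ} (s : KBGen n) : Set (Fin n) := {s.1.1, s.1.2}

/-- The support of a subset of the generating set. -/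
def KBsuppSet {n : ℕ} (X : Set (KBGen n)) : Set (Fin n) := ⋃ s ∈ X, KBsupp s

/-- Two distinct generators `δ_{i,j}` and `δ_{k,l}` are connected by an edge of the
Coxeter diagram `VΓ_n` iff either their supports `{i,j}` and `{k,l}` are disjoint
(label 2), or they are of the form `δ_{i,j}`, `δ_{j,k}` with `i,j,k` distinct, i.e. the
target of one equals the source of the other (label 3). -/
def KBedge {n : ℕ} (s t : KBGen n) : Prop :=
  (Disjoint ({s.1.1, s.1.2} : Set (Fin n)) {t.1.1, t.1.2}) ∨
  (s.1.2 = t.1.1 ∧ s.1.1 ≠ t.1.2) ∨ (t.1.2 = s.1.1 ∧ t.1.1 ≠ s.1.2)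

/-- A subset `X` of the generating set is full if any two distinct elements of `X` are
connected by an edge of `VΓ_n`. -/
def KBfull {n : ℕ} (X : Set (KBGen n)) : Prop :=
  ∀ s ∈ X, ∀ t ∈ X, s ≠ t → KBedge s t

/-- `X` is indecomposable if it is not the union of two nonempty subsets with disjoint
supports. -/
def KBindecomposable {n : ℕ} (X : Set (KBGen n)) : Prop :=
  ¬ ∃ X1 X2 : Set (KBGen n), X1.Nonempty ∧ X2.Nonempty ∧ X = X1 ∪ X2 ∧
      Disjoint (KBsuppSet X1) (KBsuppSet X2)

/-- The action of a permutation `g` on generators: `g · δ_{i,j} = δ_{g(i),g(j)}`. -/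
def permGen {n : ℕ} (g : Equiv.Perm (Fin n)) (s : KBGen n) : KBGen n :=
  ⟨(g s.1.1, g s.1.2), g.injective.ne s.2⟩

/-- The set `Z_m = {δ_{0,1}, δ_{1,2}, ..., δ_{m-2,m-1}}` (0-based indexing). -/
def Zseg (n m : ℕ) : Set (KBGen n) :=
  {s | (s.1.1 : ℕ) + 1 = (s.1.2 : ℕ) ∧ (s.1.2 : ℕ) < m}

/-- The set `Z̃_m = Z_m ∪ {δ_{m-1,0}}` (0-based indexing). -/
def Zcycle (n m : ℕ) : Set (KBGen n) :=
  Zseg n m ∪ {s | (s.1.1 : ℕ) = m - 1 ∧ (s.1.2 : ℕ) = 0}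

/-! Fullness says that the arrows `i → j`, one for each `δ_{i,j} ∈ X`, form a relation which is
left and right unique and has no 2-cycles. A longest simple path `M` along these arrows is then
closed: an arrow leaving its last vertex must enter its first one, and dually, so every arrow
meeting `M` is a step of `M` or this closing arrow. Indecomposability forces every arrow of `X` to
meet `M`; hence `X` is the path or the cycle through `M`, and a permutation sending `0, 1, …` to
the vertices of `M` carries `Z_m`, resp. `Z̃_m`, onto it. -/

section LongestPath

variable {α : Type*} {R : α → α → Prop} {M : List α}

structure IsLongestPath (R : α → α → Prop) (M : List α) : Prop where
  nodup : M.Nodup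
  isChain : M.IsChain R
  length_le : ∀ L : List α, L.Nodup → L.IsChain R → L.length ≤ M.length

theorem exists_isLongestPath [Fintype α] {L : List α} (hnd : L.Nodup) (hch : L.IsChain R) :
    ∃ M, IsLongestPath R M ∧ L.length ≤ M.length := by
  set S := {k | ∃ L : List α, L.Nodup ∧ L.IsChain R ∧ L.length = k}
  have hS : BddAbove S := ⟨Fintype.card α, by rintro _ ⟨L, hL, -, rfl⟩; exact hL.length_le_card⟩
  obtain ⟨M, hnd', hch', hM⟩ := Nat.sSup_mem (⟨_, L, hnd, hch, rfl⟩ : S.Nonempty) hS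
  exact ⟨M, ⟨hnd', hch', fun L' h₁ h₂ ↦ hM ▸ le_csSup hS ⟨L', h₁, h₂, rfl⟩⟩,
    hM ▸ le_csSup hS ⟨L, hnd, hch, rfl⟩⟩

namespace IsLongestPath

theorem reverse (h : IsLongestPath R M) : IsLongestPath (flip R) M.reverse where
  nodup := List.nodup_reverse.mpr h.nodup
  isChain := List.isChain_reverse.mpr h.isChain
  length_le L hnd hch := by
    simpa using h.length_le L.reverse (List.nodup_reverse.mpr hnd) (List.isChain_reverse.mpr hch)

theorem eq_head_of_rel_getLast (hR : Relator.LeftUnique R) (h : IsLongestPath R M)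
    (hM : M ≠ []) {c : α} (hc : R (M.getLast hM) c) : c = M.head hM := by
  have hcM : c ∈ M := by
    by_contra hcM
    have := h.length_le (M ++ [c]) (h.nodup.append (List.nodup_singleton c) (by simpa))
      (h.isChain.append (List.isChain_singleton c)
        (by simp [List.getLast?_eq_some_getLast hM, hc]))
    simp at this
  obtain ⟨k, hk, rfl⟩ := List.mem_iff_getElem.mp hcM
  rcases k with _ | k
  · exact (List.head_eq_getElem hM).symm
  · have := hR (h.isChain.getElem k hk) hc
    rw [List.getLast_eq_getElem, h.nodup.getElem_inj_iff] at this
    omega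

theorem eq_getLast_of_rel_head (hR : Relator.RightUnique R) (h : IsLongestPath R M)
    (hM : M ≠ []) {c : α} (hc : R c (M.head hM)) : c = M.getLast hM := by
  simpa using h.reverse.eq_head_of_rel_getLast
    (fun _ _ _ h₁ h₂ ↦ hR h₁ h₂ : Relator.LeftUnique (flip R))
    (List.reverse_ne_nil_iff.mpr hM) (by simpa [flip] using hc)

theorem rel_cases (hl : Relator.LeftUnique R) (hr : Relator.RightUnique R)
    (h : IsLongestPath R M) {a b : α} (hab : R a b) (hmem : a ∈ M ∨ b ∈ M) :
    (∃ (k : ℕ) (hk : k + 1 < M.length), M[k] = a ∧ M[k + 1] = b) ∨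
      ∃ hM : M ≠ [], M.getLast hM = a ∧ M.head hM = b := by
  rcases hmem with ha | hb
  · obtain ⟨k, hk, rfl⟩ := List.mem_iff_getElem.mp ha
    by_cases hk₁ : k + 1 < M.length
    · exact .inl ⟨k, hk₁, rfl, hr (h.isChain.getElem k hk₁) hab⟩
    · have hM : M ≠ [] := List.ne_nil_of_length_pos (by omega)
      have hlast : M.getLast hM = M[k] := by simp only [List.getLast_eq_getElem]; congr; omega
      exact .inr ⟨hM, hlast, (h.eq_head_of_rel_getLast hl hM (hlast ▸ hab)).symm⟩
  · obtain ⟨k, hk, rfl⟩ := List.mem_iff_getElem.mp hb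
    rcases k with _ | k
    · have hM : M ≠ [] := List.ne_nil_of_length_pos hk
      have hhead : M.head hM = M[0] := List.head_eq_getElem hM
      exact .inr ⟨hM, (h.eq_getLast_of_rel_head hr hM (hhead ▸ hab)).symm, hhead⟩
    · exact .inl ⟨k, hk, hl (h.isChain.getElem k hk) hab, rfl⟩

end IsLongestPath

theorem List.IsChain.three_le_length_of_rel_getLast_head (hR : ∀ ⦃a b⦄, R a b → ¬ R b a)
    (hch : M.IsChain R) (hM : M ≠ []) (hcycle : R (M.getLast hM) (M.head hM)) : 3 ≤ M.length :=
  match M, hM with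
  | [_], _ => (hR hcycle hcycle).elim
  | [_, _], _ => (hR (by simpa using hch) hcycle).elim
  | _ :: _ :: _ :: _, _ => by simp

end LongestPath

theorem exists_perm_apply_eq_getElem {n : ℕ} {M : List (Fin n)} (hM : M.Nodup) :
    ∃ g : Equiv.Perm (Fin n), ∀ (i : Fin n) (hi : (i : ℕ) < M.length), g i = M[(i : ℕ)] := by
  classical
  let e := (Fin.castLEquiv (by simpa using hM.length_le_card)).symm.trans
    (List.Nodup.getEquiv M hM)
  refine ⟨e.extendSubtype, fun i hi ↦ ?_⟩
  rw [Equiv.extendSubtype_apply_of_mem e i hi]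
  simp [e]

section KB

variable {n : ℕ} {X : Set (KBGen n)}

def KBarrow (X : Set (KBGen n)) (i j : Fin n) : Prop :=
  ∃ h : i ≠ j, (⟨(i, j), h⟩ : KBGen n) ∈ X

theorem mem_iff_KBarrow {s : KBGen n} : s ∈ X ↔ KBarrow X s.1.1 s.1.2 :=
  ⟨fun hs ↦ ⟨s.2, hs⟩, fun ⟨_, hs⟩ ↦ hs⟩

namespace KBfull

theorem rightUnique_KBarrow (hfull : KBfull X) : Relator.RightUnique (KBarrow X) := by
  rintro a b c ⟨hab, hs⟩ ⟨hac, ht⟩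
  by_contra hbc
  have := hfull _ hs _ ht (by simp [hbc])
  simp [KBedge, hab.symm, hac.symm] at this

theorem leftUnique_KBarrow (hfull : KBfull X) : Relator.LeftUnique (KBarrow X) := by
  rintro a b c ⟨hac, hs⟩ ⟨hbc, ht⟩
  by_contra hab
  have := hfull _ hs _ ht (by simp [hab])
  simp [KBedge, hac.symm, hbc.symm] at this

theorem not_KBarrow_symm (hfull : KBfull X) {a b : Fin n} (hab : KBarrow X a b) :
    ¬ KBarrow X b a := by
  rintro ⟨hba, ht⟩
  obtain ⟨hab, hs⟩ := hab
  have := hfull _ hs _ ht (by simp [hab])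
  simp [KBedge] at this

end KBfull

theorem KBindecomposable.forall_meets_of_closed (hind : KBindecomposable X) {C : Set (Fin n)}
    (hC : ∀ s ∈ X, s.1.1 ∈ C ∨ s.1.2 ∈ C → s.1.1 ∈ C ∧ s.1.2 ∈ C)
    (hmeet : ∃ s ∈ X, s.1.1 ∈ C ∨ s.1.2 ∈ C) : ∀ s ∈ X, s.1.1 ∈ C ∨ s.1.2 ∈ C := by
  by_contra! ⟨t, ht, htC⟩
  refine hind ⟨{s ∈ X | s.1.1 ∈ C ∨ s.1.2 ∈ C}, {s ∈ X | s.1.1 ∉ C ∧ s.1.2 ∉ C},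
    hmeet, ⟨t, ht, htC⟩, ?_, ?_⟩
  · ext; simp only [Set.mem_union, Set.mem_sep_iff]; tauto
  · refine (disjoint_compl_right (a := C)).mono (Set.iUnion₂_subset fun s hs ↦ ?_)
      (Set.iUnion₂_subset fun s hs ↦ ?_)
    · simpa [KBsupp, Set.insert_subset_iff] using hC s hs.1 hs.2
    · simpa [KBsupp, Set.insert_subset_iff] using hs.2

def pathGens (M : List (Fin n)) : Set (KBGen n) :=
  {t | ∃ (k : ℕ) (hk : k + 1 < M.length), M[k] = t.1.1 ∧ M[k + 1] = t.1.2}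

def closingGens (M : List (Fin n)) : Set (KBGen n) :=
  {t | ∃ hM : M ≠ [], M.getLast hM = t.1.1 ∧ M.head hM = t.1.2}

section Transport

variable {g : Equiv.Perm (Fin n)} {M : List (Fin n)}

theorem image_permGen_Zseg (hmn : M.length ≤ n)
    (hg : ∀ (i : Fin n) (hi : (i : ℕ) < M.length), g i = M[(i : ℕ)]) :
    permGen g '' Zseg n M.length = pathGens M := by
  ext t
  constructor
  · rintro ⟨s, ⟨hs, hs'⟩, rfl⟩
    refine ⟨s.1.1, by omega, (hg _ (by omega)).symm, ?_⟩
    simp only [permGen, hg _ hs', hs]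
  · obtain ⟨⟨a, b⟩, hab⟩ := t
    rintro ⟨k, hk, rfl, rfl⟩
    refine ⟨⟨(⟨k, by omega⟩, ⟨k + 1, by omega⟩), by simp [Fin.ext_iff]⟩, ⟨rfl, hk⟩, ?_⟩
    simp [permGen, hg ⟨k + 1, _⟩ hk, hg ⟨k, _⟩ (show k < M.length by omega)]

theorem image_permGen_Zcycle (hmn : M.length ≤ n) (hM : 2 ≤ M.length)
    (hg : ∀ (i : Fin n) (hi : (i : ℕ) < M.length), g i = M[(i : ℕ)]) :
    permGen g '' Zcycle n M.length = pathGens M ∪ closingGens M := by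
  rw [Zcycle, Set.image_union, image_permGen_Zseg hmn hg]
  congr 1
  ext t
  constructor
  · rintro ⟨s, ⟨hs, hs'⟩, rfl⟩
    refine ⟨List.ne_nil_of_length_pos (by omega), ?_, ?_⟩
    · simp [permGen, hg _ (show (s.1.1 : ℕ) < M.length by omega), List.getLast_eq_getElem,
        hs]
    · simp [permGen, hg _ (show (s.1.2 : ℕ) < M.length by omega), List.head_eq_getElem,
        hs']
  · obtain ⟨⟨a, b⟩, hab⟩ := t
    rintro ⟨hM, rfl, rfl⟩
    refine ⟨⟨(⟨M.length - 1, by omega⟩, ⟨0, by omega⟩), by simp [Fin.ext_iff]; omega⟩,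
      ⟨rfl, rfl⟩, ?_⟩
    simp [permGen, hg ⟨M.length - 1, _⟩ (show M.length - 1 < M.length by omega),
      hg ⟨0, _⟩ (show 0 < M.length by omega), List.getLast_eq_getElem, List.head_eq_getElem]

end Transport

theorem mem_of_mem_pathGens_union_closingGens {M : List (Fin n)} {t : KBGen n}
    (ht : t ∈ pathGens M ∪ closingGens M) : t.1.1 ∈ M ∧ t.1.2 ∈ M := by
  rcases ht with ⟨k, hk, h₁, h₂⟩ | ⟨hM, h₁, h₂⟩
  · exact ⟨h₁ ▸ List.getElem_mem _, h₂ ▸ List.getElem_mem _⟩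
  · exact ⟨h₁ ▸ List.getLast_mem hM, h₂ ▸ List.head_mem hM⟩

theorem pathGens_subset {M : List (Fin n)} (h : M.IsChain (KBarrow X)) : pathGens M ⊆ X := by
  rintro t ⟨k, hk, h₁, h₂⟩
  exact mem_iff_KBarrow.mpr (h₁ ▸ h₂ ▸ h.getElem k hk)

theorem closingGens_subset {M : List (Fin n)} (hM : M ≠ [])
    (h : KBarrow X (M.getLast hM) (M.head hM)) : closingGens M ⊆ X := by
  rintro t ⟨_, h₁, h₂⟩
  exact mem_iff_KBarrow.mpr (h₁ ▸ h₂ ▸ h)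

end KB

/-- If `X` is a full and indecomposable nonempty subset of the
generating set `S` of `KB n`, then there are a permutation `g ∈ S_n` and an integer
`2 ≤ m ≤ n` such that either `X = g · Z_m`, or `X = g · Z̃_m` with `m ≥ 3`. -/
theorem full_indecomposable_classification (n : ℕ) (X : Set (KBGen n))
    (hne : X.Nonempty) (hfull : KBfull X) (hind : KBindecomposable X) :
    ∃ (g : Equiv.Perm (Fin n)) (m : ℕ), 2 ≤ m ∧ m ≤ n ∧
      (X = permGen g '' Zseg n m ∨ (3 ≤ m ∧ X = permGen g '' Zcycle n m)) := by
  obtain ⟨s, hs⟩ := hne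
  obtain ⟨M, hM, hlen⟩ := exists_isLongestPath (R := KBarrow X) (L := [s.1.1, s.1.2])
    (by simpa using s.2) (by simpa using mem_iff_KBarrow.mp hs)
  replace hlen : 2 ≤ M.length := by simpa using hlen
  have hMne : M ≠ [] := List.ne_nil_of_length_pos (by omega)
  have hmn : M.length ≤ n := by simpa using hM.nodup.length_le_card
  obtain ⟨g, hg⟩ := exists_perm_apply_eq_getElem hM.nodup
  have hclosed : ∀ t ∈ X, t.1.1 ∈ M ∨ t.1.2 ∈ M → t ∈ pathGens M ∪ closingGens M :=
    fun t ht ↦ hM.rel_cases hfull.leftUnique_KBarrow hfull.rightUnique_KBarrow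
      (mem_iff_KBarrow.mp ht)
  obtain ⟨_, hM₀₁⟩ := hM.isChain.getElem 0 hlen
  have hsub : X ⊆ pathGens M ∪ closingGens M := fun t ht ↦ hclosed t ht <|
    hind.forall_meets_of_closed (C := {x | x ∈ M})
      (fun t ht h ↦ mem_of_mem_pathGens_union_closingGens (hclosed t ht h))
      ⟨_, hM₀₁, .inl (List.getElem_mem _)⟩ t ht
  by_cases hcycle : KBarrow X (M.getLast hMne) (M.head hMne)
  · refine ⟨g, M.length, hlen, hmn, .inr ⟨?_, ?_⟩⟩
    · exact hM.isChain.three_le_length_of_rel_getLast_head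
        (fun _ _ ↦ hfull.not_KBarrow_symm) hMne hcycle
    rw [image_permGen_Zcycle hmn hlen hg]
    exact hsub.antisymm (Set.union_subset (pathGens_subset hM.isChain)
      (closingGens_subset hMne hcycle))
  · refine ⟨g, M.length, hlen, hmn, .inl ?_⟩
    rw [image_permGen_Zseg hmn hg]
    refine Set.Subset.antisymm (fun t ht ↦ (hsub ht).resolve_right ?_)
      (pathGens_subset hM.isChain)
    rintro ⟨_, h₁, h₂⟩
    exact hcycle (h₁ ▸ h₂ ▸ mem_iff_KBarrow.mp ht)
end
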